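/- arXiv:2510.23459 — 6 statements merged into one kernel-verified Lean document; each statement's English description precedes it below -/
import Mathlib

section
/- Let a < b be real numbers, τ > 0, and ũ ∈ ℝ. Set u := cutoff(ũ) = max(a, min(b, ũ)) and λ := |ũ − u| / (τ(b − a)). Then the pair (u, λ) satisfies the KKT corrector conditions: (u − ũ)/τ = λ·g'(u), λ ≥ 0, g(u) ≥ 0, and λ·g(u) = 0. -/
/-- The pair `(u, λ)` given by the cutoff and the explicit multiplier satisfies the
KKT corrector conditions of the bound-preserving structure-preservation scheme. -/
theorem stmt_0 (a b τ uPred : ℝ) (hab : a < b) (hτ : 0 < τ) :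
    let g : ℝ → ℝ := fun u => (b - u) * (u - a)
    let g' : ℝ → ℝ := fun u => a + b - 2 * u
    let u : ℝ := max a (min b uPred)
    let lam : ℝ := |uPred - u| / (τ * (b - a))
    (u - uPred) / τ = lam * g' u ∧ 0 ≤ lam ∧ 0 ≤ g u ∧ lam * g u = 0 := by
  intro g g' u lam
  have hba : (0:ℝ) < b - a := by linarith
  have hlam : 0 ≤ lam := div_nonneg (abs_nonneg _) (by positivity)
  rcases le_total uPred a with h1 | h1
  · have hu : u = a := by
      simp only [u, min_eq_right (le_trans h1 hab.le), max_eq_left h1]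
    refine ⟨?_, hlam, ?_, ?_⟩
    · simp only [lam, g', hu]
      rw [abs_of_nonpos (by linarith : uPred - a ≤ 0)]
      field_simp
      ring
    · simp [g, hu]
    · simp [g, hu]
  rcases le_total b uPred with h2 | h2
  · have hu : u = b := by
      simp only [u, min_eq_left h2, max_eq_right hab.le]
    refine ⟨?_, hlam, ?_, ?_⟩
    · simp only [lam, g', hu]
      rw [abs_of_nonneg (by linarith : 0 ≤ uPred - b)]
      field_simp
      ring
    · simp [g, hu]
    · simp [g, hu]
  · have hu : u = uPred := by
      simp only [u, min_eq_right h2, max_eq_right h1]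
    have habs : |uPred - u| = 0 := by simp [hu]
    have hlam0 : lam = 0 := by simp [lam, habs]
    refine ⟨?_, hlam, ?_, ?_⟩
    · simp [hlam0, hu]
    · have : 0 ≤ (b - u) * (u - a) := mul_nonneg (by rw [hu]; linarith) (by rw [hu]; linarith)
      simpa [g] using this
    · simp [hlam0]
end

section
/- Let a < b be real numbers, τ > 0, and ũ ∈ ℝ. If a pair (u, λ) ∈ ℝ × ℝ satisfies the KKT corrector conditions (u − ũ)/τ = λ·g'(u), λ ≥ 0, g(u) ≥ 0, and λ·g(u) = 0, then necessarily u = cutoff(ũ) = max(a, min(b, ũ)) and λ = |ũ − cutoff(ũ)| / (τ(b − a)); in particular the solution of the corrector step is unique and is given by the cutoff function. -/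
/-- Uniqueness of the KKT corrector step: any solution `(u, λ)` of the KKT conditions
is given by the cutoff function and the explicit multiplier. -/
theorem stmt_1 (a b τ uPred u lam : ℝ) (hab : a < b) (hτ : 0 < τ)
    (h1 : (u - uPred) / τ = lam * (a + b - 2 * u))
    (h2 : 0 ≤ lam)
    (h3 : 0 ≤ (b - u) * (u - a))
    (h4 : lam * ((b - u) * (u - a)) = 0) :
    u = max a (min b uPred) ∧ lam = |uPred - max a (min b uPred)| / (τ * (b - a)) := by
  have hba : (0:ℝ) < b - a := by linarith
  have hτba : (0:ℝ) < τ * (b - a) := by positivity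
  rcases mul_eq_zero.mp h4 with hl | hg
  · subst hl
    have hu : u = uPred := by
      field_simp at h1; linarith
    subst hu
    have hub : u ≤ b := by nlinarith
    have hua : a ≤ u := by nlinarith
    have hmin : min b u = u := min_eq_right hub
    have hmax : max a (min b u) = u := by rw [hmin]; exact max_eq_right hua
    rw [hmax]
    constructor
    · rfl
    · simp
  · rcases mul_eq_zero.mp hg with hb' | ha'
    · -- u = b
      have hu : u = b := by linarith
      subst u
      have h1' : b - uPred = τ * (lam * (a - b)) := by
        field_simp at h1; linarith
      have hup : b ≤ uPred := by nlinarith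
      have hmin : min b uPred = b := min_eq_left hup
      have hmax : max a (min b uPred) = b := by rw [hmin]; exact max_eq_right (le_of_lt hab)
      rw [hmax]
      refine ⟨rfl, ?_⟩
      rw [abs_of_nonneg (by linarith)]
      field_simp
      nlinarith
    · -- u = a
      have hu : u = a := by linarith
      subst u
      have h1' : a - uPred = τ * (lam * (b - a)) := by
        field_simp at h1; linarith
      have hup : uPred ≤ a := by nlinarith
      have hmin : min b uPred = uPred := min_eq_right (by linarith)
      have hmax : max a (min b uPred) = a := by rw [hmin]; exact max_eq_left hup
      rw [hmax]
      refine ⟨rfl, ?_⟩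
      rw [abs_of_nonpos (by linarith)]
      field_simp
      nlinarith
end

section
/- Let a < b, τ > 0, let Σ be a nonempty finite index set with weights ω_p > 0 and predicted values ũ_p ∈ ℝ for p ∈ Σ, and let m ∈ ℝ. The nonlinear equation F(ξ) = 0, where F(ξ) = Σ_{p∈Σ} ω_p·cutoff(ũ_p + τξ) − m, has a solution ξ ∈ ℝ if and only if a·Σ_{p∈Σ} ω_p ≤ m ≤ b·Σ_{p∈Σ} ω_p. -/
/-!
Each clamped value lies in `[a, b]`, so the weighted sum lies in `[a ∑ ω, b ∑ ω]`. Conversely the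
weighted sum is continuous in `ξ` and, since `τ > 0`, equals `a ∑ ω` for `ξ` near `-∞` and `b ∑ ω`
for `ξ` near `+∞` (finitely many indices); the intermediate value theorem does the rest.
-/

open Filter Finset

section Clamp

variable {α : Type*} [LinearOrder α] {a b x : α}

theorem max_min_eq_left_of_le (hab : a ≤ b) (hx : x ≤ a) : max a (min b x) = a := by
  rw [min_eq_right (hx.trans hab), max_eq_left hx]

theorem max_min_eq_right_of_le (hab : a ≤ b) (hx : b ≤ x) : max a (min b x) = b := by
  rw [min_eq_left hx, max_eq_right hab]

end Clamp

section WeightedSum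

variable {ι R : Type*} [CommSemiring R] [PartialOrder R] [IsOrderedRing R]
  {S : Finset ι} {ω f : ι → R} {c : R}

theorem mul_sum_le_sum_mul_of_le (hω : ∀ p ∈ S, 0 ≤ ω p) (hf : ∀ p ∈ S, c ≤ f p) :
    c * ∑ p ∈ S, ω p ≤ ∑ p ∈ S, ω p * f p := by
  rw [mul_sum]
  refine sum_le_sum fun p hp => ?_
  rw [mul_comm]
  exact mul_le_mul_of_nonneg_left (hf p hp) (hω p hp)

theorem sum_mul_le_mul_sum_of_le (hω : ∀ p ∈ S, 0 ≤ ω p) (hf : ∀ p ∈ S, f p ≤ c) :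
    ∑ p ∈ S, ω p * f p ≤ c * ∑ p ∈ S, ω p := by
  rw [mul_sum]
  refine sum_le_sum fun p hp => ?_
  rw [mul_comm c]
  exact mul_le_mul_of_nonneg_left (hf p hp) (hω p hp)

end WeightedSum

section AffineClamp

variable {ι : Type*} {a b τ : ℝ}

theorem eventually_atBot_max_min_affine_eq (hab : a ≤ b) (hτ : 0 < τ) (u : ℝ) :
    ∀ᶠ ξ in atBot, max a (min b (u + τ * ξ)) = a :=
  ((tendsto_atBot_add_const_left _ u (tendsto_id.const_mul_atBot hτ)).eventually_le_atBot a).mono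
    fun _ => max_min_eq_left_of_le hab

theorem eventually_atTop_max_min_affine_eq (hab : a ≤ b) (hτ : 0 < τ) (u : ℝ) :
    ∀ᶠ ξ in atTop, max a (min b (u + τ * ξ)) = b :=
  ((tendsto_atTop_add_const_left _ u (tendsto_id.const_mul_atTop hτ)).eventually_ge_atTop b).mono
    fun _ => max_min_eq_right_of_le hab

theorem eventually_atBot_sum_mul_max_min_affine_eq (hab : a ≤ b) (hτ : 0 < τ) (S : Finset ι)
    (ω u : ι → ℝ) :
    ∀ᶠ ξ in atBot, ∑ p ∈ S, ω p * max a (min b (u p + τ * ξ)) = a * ∑ p ∈ S, ω p := by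
  filter_upwards [(eventually_all_finset S).2 fun p _ =>
    eventually_atBot_max_min_affine_eq hab hτ (u p)] with ξ hξ
  rw [mul_sum]
  exact sum_congr rfl fun p hp => by rw [hξ p hp, mul_comm]

theorem eventually_atTop_sum_mul_max_min_affine_eq (hab : a ≤ b) (hτ : 0 < τ) (S : Finset ι)
    (ω u : ι → ℝ) :
    ∀ᶠ ξ in atTop, ∑ p ∈ S, ω p * max a (min b (u p + τ * ξ)) = b * ∑ p ∈ S, ω p := by
  filter_upwards [(eventually_all_finset S).2 fun p _ =>
    eventually_atTop_max_min_affine_eq hab hτ (u p)] with ξ hξ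
  rw [mul_sum]
  exact sum_congr rfl fun p hp => by rw [hξ p hp, mul_comm]

end AffineClamp

theorem stmt_3_general {ι : Type*} (a b τ m : ℝ) (hab : a < b) (hτ : 0 < τ)
    (S : Finset ι) (ω : ι → ℝ) (hω : ∀ p ∈ S, 0 < ω p)
    (uPred : ι → ℝ) :
    (∃ ξ : ℝ, (∑ p ∈ S, ω p * max a (min b (uPred p + τ * ξ))) - m = 0) ↔
      (a * ∑ p ∈ S, ω p ≤ m ∧ m ≤ b * ∑ p ∈ S, ω p) := by
  have hω₀ : ∀ p ∈ S, 0 ≤ ω p := fun p hp => (hω p hp).le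
  simp only [sub_eq_zero]
  constructor
  · rintro ⟨ξ, rfl⟩
    exact ⟨mul_sum_le_sum_mul_of_le hω₀ fun _ _ => le_max_left _ _,
      sum_mul_le_mul_sum_of_le hω₀ fun _ _ => max_le hab.le (min_le_left _ _)⟩
  · intro hm
    obtain ⟨ξ₁, hξ₁⟩ := (eventually_atBot_sum_mul_max_min_affine_eq hab.le hτ S ω uPred).exists
    obtain ⟨ξ₂, hξ₂⟩ := (eventually_atTop_sum_mul_max_min_affine_eq hab.le hτ S ω uPred).exists
    have hcont : Continuous fun ξ => ∑ p ∈ S, ω p * max a (min b (uPred p + τ * ξ)) := by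
      fun_prop
    exact intermediate_value_univ ξ₁ ξ₂ hcont (by rwa [hξ₁, hξ₂])

/-- The nonlinear mass-constraint equation `F(ξ) = 0` has a solution if and only if
the target mass `m` lies between `a·∑ω` and `b·∑ω`. -/
theorem stmt_3 {ι : Type*} (a b τ m : ℝ) (hab : a < b) (hτ : 0 < τ)
    (S : Finset ι) (hS : S.Nonempty) (ω : ι → ℝ) (hω : ∀ p ∈ S, 0 < ω p)
    (uPred : ι → ℝ) :
    (∃ ξ : ℝ, (∑ p ∈ S, ω p * max a (min b (uPred p + τ * ξ))) - m = 0) ↔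
      (a * ∑ p ∈ S, ω p ≤ m ∧ m ≤ b * ∑ p ∈ S, ω p) :=
  stmt_3_general a b τ m hab hτ S ω hω uPred
end

section
/- Let a < b, τ > 0, let Σ be a nonempty finite index set with weights ω_p > 0 and predicted values ũ_p ∈ ℝ for p ∈ Σ, and let m ∈ ℝ satisfy a·Σ_{p∈Σ} ω_p ≤ m ≤ b·Σ_{p∈Σ} ω_p. Then there exist ξ ∈ ℝ and families (u_p)_{p∈Σ}, (λ_p)_{p∈Σ} of real numbers such that for every p ∈ Σ: (u_p − ũ_p)/τ = λ_p·g'(u_p) + ξ, λ_p ≥ 0, g(u_p) ≥ 0, λ_p·g(u_p) = 0, and moreover u_p = cutoff(ũ_p + τξ), a ≤ u_p ≤ b, and Σ_{p∈Σ} ω_p u_p = m. In other words, the mass- and bound-preserving corrector step is solvable, its solution is given by the shifted cutoff, and it preserves both the bounds [a,b] and the total mass m exactly. -/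
/-!
For any shift `ξ`, the values `u_p = cutoff (ũ_p + τ ξ)` satisfy the pointwise KKT conditions:
`u_p - (ũ_p + τ ξ)` vanishes unless `u_p` sits at an active bound, where it has the sign of
`g'(u_p)` (`g'(a) = b - a > 0`, `g'(b) = a - b < 0`), so it is a nonnegative multiple of
`g'(u_p)`. The mass `ξ ↦ ∑ ω_p cutoff (ũ_p + τ ξ)` is continuous and equals `a ∑ ω_p` for
`ξ ≪ 0` and `b ∑ ω_p` for `ξ ≫ 0`, so by the intermediate value theorem some `ξ` attains `m`.
-/

open Filter

def cutoff {α : Type*} [LinearOrder α] (a b x : α) : α := max a (min b x)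

section LinearOrder

variable {α : Type*} [LinearOrder α] {a b x : α}

lemma left_le_cutoff : a ≤ cutoff a b x := le_max_left _ _

lemma cutoff_le_right (hab : a ≤ b) : cutoff a b x ≤ b := max_le hab (min_le_left _ _)

lemma cutoff_eq_left (hab : a ≤ b) (hx : x ≤ a) : cutoff a b x = a := by
  rw [cutoff, min_eq_right (hx.trans hab), max_eq_left hx]

lemma cutoff_eq_right (hab : a ≤ b) (hx : b ≤ x) : cutoff a b x = b := by
  rw [cutoff, min_eq_left hx, max_eq_right hab]

lemma cutoff_eq_self (hax : a ≤ x) (hxb : x ≤ b) : cutoff a b x = x := by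
  rw [cutoff, min_eq_right hxb, max_eq_right hax]

end LinearOrder

lemma continuous_cutoff {α : Type*} [TopologicalSpace α] [LinearOrder α] [OrderClosedTopology α]
    (a b : α) : Continuous (cutoff a b) := by
  unfold cutoff; fun_prop

lemma exists_kkt_multiplier_cutoff {a b : ℝ} (hab : a < b) (x : ℝ) :
    ∃ μ : ℝ, cutoff a b x - x = μ * (a + b - 2 * cutoff a b x) ∧ 0 ≤ μ ∧
      μ * ((b - cutoff a b x) * (cutoff a b x - a)) = 0 := by
  rcases le_or_gt x a with hxa | hax
  · refine ⟨(a - x) / (b - a), ?_, by apply div_nonneg <;> linarith, ?_⟩ <;>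
      rw [cutoff_eq_left hab.le hxa]
    · field_simp [(sub_pos.2 hab).ne']; ring
    · ring
  rcases le_or_gt x b with hxb | hbx
  · exact ⟨0, by rw [cutoff_eq_self hax.le hxb]; ring, le_rfl, zero_mul _⟩
  · refine ⟨(x - b) / (b - a), ?_, by apply div_nonneg <;> linarith, ?_⟩ <;>
      rw [cutoff_eq_right hab.le hbx.le]
    · field_simp [(sub_pos.2 hab).ne']; ring
    · ring

section Mass

variable {ι : Type*} {a b : ℝ} (S : Finset ι) (ω v : ι → ℝ)

lemma eventually_sum_cutoff_add_atTop (hab : a ≤ b) :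
    ∀ᶠ η in atTop, ∑ p ∈ S, ω p * cutoff a b (v p + η) = b * ∑ p ∈ S, ω p := by
  have hsat : ∀ᶠ η in atTop, ∀ p ∈ S, cutoff a b (v p + η) = b := by
    rw [eventually_all_finset]
    intro p _
    filter_upwards [eventually_ge_atTop (b - v p)] with η hη
    exact cutoff_eq_right hab (by linarith)
  filter_upwards [hsat] with η hη
  rw [Finset.mul_sum]
  exact Finset.sum_congr rfl fun p hp => by rw [hη p hp, mul_comm]

lemma eventually_sum_cutoff_add_atBot (hab : a ≤ b) :
    ∀ᶠ η in atBot, ∑ p ∈ S, ω p * cutoff a b (v p + η) = a * ∑ p ∈ S, ω p := by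
  have hsat : ∀ᶠ η in atBot, ∀ p ∈ S, cutoff a b (v p + η) = a := by
    rw [eventually_all_finset]
    intro p _
    filter_upwards [eventually_le_atBot (a - v p)] with η hη
    exact cutoff_eq_left hab (by linarith)
  filter_upwards [hsat] with η hη
  rw [Finset.mul_sum]
  exact Finset.sum_congr rfl fun p hp => by rw [hη p hp, mul_comm]

lemma exists_sum_cutoff_add_eq (hab : a ≤ b) {m : ℝ} (hm₁ : a * ∑ p ∈ S, ω p ≤ m)
    (hm₂ : m ≤ b * ∑ p ∈ S, ω p) : ∃ η, ∑ p ∈ S, ω p * cutoff a b (v p + η) = m := by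
  obtain ⟨η₁, hη₁⟩ := (eventually_sum_cutoff_add_atBot S ω v hab).exists
  obtain ⟨η₂, hη₂⟩ := (eventually_sum_cutoff_add_atTop S ω v hab).exists
  have hcont : Continuous fun η => ∑ p ∈ S, ω p * cutoff a b (v p + η) := by
    have := continuous_cutoff a b
    fun_prop
  have hm : m ∈ Set.uIcc (∑ p ∈ S, ω p * cutoff a b (v p + η₁))
      (∑ p ∈ S, ω p * cutoff a b (v p + η₂)) :=
    Set.Icc_subset_uIcc (by rw [hη₁, hη₂]; exact ⟨hm₁, hm₂⟩)
  obtain ⟨η, -, hη⟩ := intermediate_value_uIcc hcont.continuousOn hm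
  exact ⟨η, hη⟩

end Mass

theorem stmt_4_general {ι : Type*} (a b τ m : ℝ) (hab : a < b) (hτ : 0 < τ)
    (S : Finset ι) (ω : ι → ℝ)
    (uPred : ι → ℝ)
    (hm₁ : a * ∑ p ∈ S, ω p ≤ m) (hm₂ : m ≤ b * ∑ p ∈ S, ω p) :
    ∃ (ξ : ℝ) (u lam : ι → ℝ),
      (∀ p ∈ S,
        (u p - uPred p) / τ = lam p * (a + b - 2 * u p) + ξ ∧
        0 ≤ lam p ∧
        0 ≤ (b - u p) * (u p - a) ∧
        lam p * ((b - u p) * (u p - a)) = 0 ∧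
        u p = max a (min b (uPred p + τ * ξ)) ∧
        a ≤ u p ∧ u p ≤ b) ∧
      ∑ p ∈ S, ω p * u p = m := by
  obtain ⟨η, hη⟩ := exists_sum_cutoff_add_eq S ω uPred hab.le hm₁ hm₂
  have hτη : τ * (η / τ) = η := mul_div_cancel₀ η hτ.ne'
  choose μ hμ using fun p => exists_kkt_multiplier_cutoff hab (uPred p + η)
  refine ⟨η / τ, fun p => cutoff a b (uPred p + η), fun p => μ p / τ, fun p _ => ?_, hη⟩
  obtain ⟨hstat, hμ_nonneg, hcompl⟩ := hμ p
  have ha : a ≤ cutoff a b (uPred p + η) := left_le_cutoff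
  have hb : cutoff a b (uPred p + η) ≤ b := cutoff_le_right hab.le
  refine ⟨?_, div_nonneg hμ_nonneg hτ.le, by nlinarith, ?_, by rw [hτη]; rfl, ha, hb⟩
  · field_simp
    linarith
  · rw [div_mul_eq_mul_div, hcompl, zero_div]

/-- Solvability of the mass- and bound-preserving corrector step: if the target mass is
admissible, there is a global multiplier `ξ`, corrected values `u_p` and pointwise
multipliers `λ_p` satisfying the KKT system; the solution is the shifted cutoff, the
bounds `[a, b]` hold, and the total mass is preserved exactly. -/
theorem stmt_4 {ι : Type*} (a b τ m : ℝ) (hab : a < b) (hτ : 0 < τ)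
    (S : Finset ι) (hS : S.Nonempty) (ω : ι → ℝ) (hω : ∀ p ∈ S, 0 < ω p)
    (uPred : ι → ℝ)
    (hm₁ : a * ∑ p ∈ S, ω p ≤ m) (hm₂ : m ≤ b * ∑ p ∈ S, ω p) :
    ∃ (ξ : ℝ) (u lam : ι → ℝ),
      (∀ p ∈ S,
        (u p - uPred p) / τ = lam p * (a + b - 2 * u p) + ξ ∧
        0 ≤ lam p ∧
        0 ≤ (b - u p) * (u p - a) ∧
        lam p * ((b - u p) * (u p - a)) = 0 ∧
        u p = max a (min b (uPred p + τ * ξ)) ∧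
        a ≤ u p ∧ u p ≤ b) ∧
      ∑ p ∈ S, ω p * u p = m :=
  stmt_4_general a b τ m hab hτ S ω uPred hm₁ hm₂
end

section
/- Let a < b, τ > 0, let Σ be a nonempty finite index set with weights ω_p > 0 and predicted values ũ_p ∈ ℝ for p ∈ Σ, and let m ∈ ℝ. If ξ₁, ξ₂ ∈ ℝ are both roots of F, i.e. F(ξ₁) = F(ξ₂) = 0 where F(ξ) = Σ_{p∈Σ} ω_p·cutoff(ũ_p + τξ) − m, then cutoff(ũ_p + τξ₁) = cutoff(ũ_p + τξ₂) for every p ∈ Σ; that is, although the Lagrange multiplier ξ may be non-unique, the corrected nodal values are uniquely determined. -/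
lemma eq_of_sum_mul_eq_of_monotone {ι α R : Type*} [LinearOrder α] [Field R] [LinearOrder R]
    [IsStrictOrderedRing R] {S : Finset ι} {ω : ι → R} (hω : ∀ p ∈ S, 0 < ω p)
    {f : ι → α → R} (hf : ∀ p ∈ S, Monotone (f p)) {x y : α}
    (hsum : ∑ p ∈ S, ω p * f p x = ∑ p ∈ S, ω p * f p y) :
    ∀ p ∈ S, f p x = f p y := by
  wlog hxy : x ≤ y generalizing x y
  · exact fun p hp => (this hsum.symm (le_of_not_ge hxy) p hp).symm
  have hterm : ∀ p ∈ S, ω p * f p x ≤ ω p * f p y := fun p hp =>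
    mul_le_mul_of_nonneg_left (hf p hp hxy) (hω p hp).le
  intro p hp
  exact mul_left_cancel₀ (hω p hp).ne' ((Finset.sum_eq_sum_iff_of_le hterm).mp hsum p hp)

lemma monotone_max_min_add_mul (a b u : ℝ) {τ : ℝ} (hτ : 0 ≤ τ) :
    Monotone fun ξ : ℝ => max a (min b (u + τ * ξ)) :=
  monotone_const.max (monotone_const.min (monotone_const.add (monotone_id.const_mul hτ)))

theorem stmt_5_general {ι : Type*} (a b τ m : ℝ) (hτ : 0 < τ)
    (S : Finset ι) (ω : ι → ℝ) (hω : ∀ p ∈ S, 0 < ω p)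
    (uPred : ι → ℝ) (ξ₁ ξ₂ : ℝ)
    (h1 : (∑ p ∈ S, ω p * max a (min b (uPred p + τ * ξ₁))) - m = 0)
    (h2 : (∑ p ∈ S, ω p * max a (min b (uPred p + τ * ξ₂))) - m = 0) :
    ∀ p ∈ S, max a (min b (uPred p + τ * ξ₁)) = max a (min b (uPred p + τ * ξ₂)) :=
  eq_of_sum_mul_eq_of_monotone hω (fun p _ => monotone_max_min_add_mul a b (uPred p) hτ.le)
    (by linarith)

/-- Although the global Lagrange multiplier `ξ` may be non-unique, any two roots of the
mass-constraint residual `F` produce the same corrected nodal values. -/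
theorem stmt_5 {ι : Type*} (a b τ m : ℝ) (hab : a < b) (hτ : 0 < τ)
    (S : Finset ι) (hS : S.Nonempty) (ω : ι → ℝ) (hω : ∀ p ∈ S, 0 < ω p)
    (uPred : ι → ℝ) (ξ₁ ξ₂ : ℝ)
    (h1 : (∑ p ∈ S, ω p * max a (min b (uPred p + τ * ξ₁))) - m = 0)
    (h2 : (∑ p ∈ S, ω p * max a (min b (uPred p + τ * ξ₂))) - m = 0) :
    ∀ p ∈ S, max a (min b (uPred p + τ * ξ₁)) = max a (min b (uPred p + τ * ξ₂)) :=
  stmt_5_general a b τ m hτ S ω hω uPred ξ₁ ξ₂ h1 h2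
end

section
/- Let a < b, τ > 0, let Σ be a nonempty finite index set with weights ω_p > 0 and predicted values ũ_p ∈ ℝ for p ∈ Σ, and let m ∈ ℝ. Suppose the predicted values are already admissible: a ≤ ũ_p ≤ b for every p ∈ Σ and Σ_{p∈Σ} ω_p ũ_p = m. Then every solution (ξ, (u_p), (λ_p)) of the mass-preserving KKT corrector system satisfies u_p = ũ_p for all p ∈ Σ; that is, the structure-preserving postprocessing step does not alter predictions that already satisfy the bounds and the mass constraint. -/
/-- If the predicted values already satisfy the bounds and the mass constraint, then every
solution of the mass-preserving KKT corrector system leaves them unchanged. -/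
theorem stmt_6 {ι : Type*} (a b τ m : ℝ) (hab : a < b) (hτ : 0 < τ)
    (S : Finset ι) (hS : S.Nonempty) (ω : ι → ℝ) (hω : ∀ p ∈ S, 0 < ω p)
    (uPred : ι → ℝ)
    (hadm : ∀ p ∈ S, a ≤ uPred p ∧ uPred p ≤ b)
    (hmass : ∑ p ∈ S, ω p * uPred p = m)
    (ξ : ℝ) (u lam : ι → ℝ)
    (hKKT : ∀ p ∈ S,
      (u p - uPred p) / τ = lam p * (a + b - 2 * u p) + ξ ∧
      0 ≤ lam p ∧
      0 ≤ (b - u p) * (u p - a) ∧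
      lam p * ((b - u p) * (u p - a)) = 0)
    (hsum : ∑ p ∈ S, ω p * u p = m) :
    ∀ p ∈ S, u p = uPred p := by
  have key : ∀ p ∈ S, (0 ≤ ξ → uPred p ≤ u p) ∧ (ξ ≤ 0 → u p ≤ uPred p) := by
    intro p hp
    obtain ⟨heq, hlam, hg, hcomp⟩ := hKKT p hp
    obtain ⟨ha, hb⟩ := hadm p hp
    have heq' : u p - uPred p = τ * (lam p * (a + b - 2 * u p) + ξ) := by
      field_simp at heq
      linarith
    rcases mul_eq_zero.mp hcomp with h0 | h0
    · constructor <;> intro hξ <;> rw [h0] at heq' <;> nlinarith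
    · rcases mul_eq_zero.mp h0 with h1 | h1
      · have hub : u p = b := by linarith
        constructor <;> intro hξ
        · rw [hub]; exact hb
        · rw [hub] at heq' ⊢
          nlinarith [mul_nonneg hlam (sub_nonneg.mpr hab.le),
            mul_nonneg (mul_nonneg hτ.le hlam) (sub_nonneg.mpr hab.le)]
      · have hua : u p = a := by linarith
        constructor <;> intro hξ
        · rw [hua] at heq' ⊢
          nlinarith [mul_nonneg (mul_nonneg hτ.le hlam) (sub_nonneg.mpr hab.le)]
        · rw [hua]; exact ha
    
  have hdiff : ∑ p ∈ S, ω p * (u p - uPred p) = 0 := by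
    simp only [mul_sub, Finset.sum_sub_distrib, hmass, hsum, sub_self]
  intro p hp
  rcases le_total 0 ξ with hξ | hξ
  · have hzero := (Finset.sum_eq_zero_iff_of_nonneg (fun q hq =>
      mul_nonneg (hω q hq).le (sub_nonneg.mpr ((key q hq).1 hξ)))).mp hdiff p hp
    have := (hω p hp).ne'
    have : u p - uPred p = 0 := by
      rcases mul_eq_zero.mp hzero with h | h
      · exact absurd h this
      · exact h
    linarith
  · have hdiff' : ∑ p ∈ S, ω p * (uPred p - u p) = 0 := by
      simp only [mul_sub, Finset.sum_sub_distrib, hmass, hsum, sub_self]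
    have hzero := (Finset.sum_eq_zero_iff_of_nonneg (fun q hq =>
      mul_nonneg (hω q hq).le (sub_nonneg.mpr ((key q hq).2 hξ)))).mp hdiff' p hp
    have := (hω p hp).ne'
    have : uPred p - u p = 0 := by
      rcases mul_eq_zero.mp hzero with h | h
      · exact absurd h this
      · exact h
    linarith
end
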